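/- arXiv:2307.13097 — 3 statements merged into one kernel-verified Lean document; each statement's English description precedes it below -/
import Mathlib

section
/- Let A and B be positive definite n×n complex matrices and let 0 ≤ p ≤ 1. Then Tr(A^p B^{1−p}) ≤ p · Tr(A) + (1−p) · Tr(B), where the trace of the product of the two positive definite matrices A^p and B^{1−p} is a real number. -/
open Matrix ComplexOrder

/-- Functional calculus for Hermitian complex matrices: apply `f` to the eigenvalues.
(For non-Hermitian input we return `0`; all matrices considered below are Hermitian.) -/
noncomputable def mfun {n : ℕ} (f : ℝ → ℝ) (A : Matrix (Fin n) (Fin n) ℂ) :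
    Matrix (Fin n) (Fin n) ℂ :=
  if hA : A.IsHermitian then
    (hA.eigenvectorUnitary : Matrix (Fin n) (Fin n) ℂ) *
      Matrix.diagonal (fun i => (f (hA.eigenvalues i) : ℂ)) *
      (hA.eigenvectorUnitary : Matrix (Fin n) (Fin n) ℂ)ᴴ
  else 0

/-- Real matrix power `A^r` of a Hermitian matrix, via functional calculus
(`t ↦ t ^ r` is the real power, with the convention `0 ^ r = 0` for `r ≠ 0`). -/
noncomputable def mpow {n : ℕ} (A : Matrix (Fin n) (Fin n) ℂ) (r : ℝ) :
    Matrix (Fin n) (Fin n) ℂ :=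
  mfun (fun t => t ^ r) A

/-! Diagonalize `A = U diag(a) U*` and `B = V diag(b) V*`. Then
`Tr(A^p B^(1-p)) = ∑ i j, a i ^ p * b j ^ (1-p) * |W i j|²` with `W = U* V` unitary, so the
weights `|W i j|²` form a doubly stochastic matrix. The scalar Young inequality
`a ^ p * b ^ (1-p) ≤ p a + (1-p) b`, summed against these weights, gives
`p ∑ a i + (1-p) ∑ b j = p Tr A + (1-p) Tr B`. -/

namespace Matrix

variable {m : Type*} [Fintype m] [DecidableEq m]

lemma trace_conj_diagonal_mul_conj_diagonal {R : Type*} [CommRing R] [StarRing R]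
    (U V : Matrix m m R) (d e : m → R) :
    (U * diagonal d * Uᴴ * (V * diagonal e * Vᴴ)).trace =
      ∑ i, ∑ j, d i * e j * ((Uᴴ * V) i j * star ((Uᴴ * V) i j)) := by
  have hcycle : (U * diagonal d * Uᴴ * (V * diagonal e * Vᴴ)).trace =
      (diagonal d * (Uᴴ * V) * diagonal e * (Uᴴ * V)ᴴ).trace := by
    simp only [conjTranspose_mul, conjTranspose_conjTranspose, Matrix.mul_assoc]
    rw [trace_mul_comm]
    simp only [Matrix.mul_assoc]
  rw [hcycle, trace]
  refine Finset.sum_congr rfl fun i _ => ?_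
  rw [diag_apply, mul_apply]
  refine Finset.sum_congr rfl fun j _ => ?_
  rw [mul_diagonal, diagonal_mul, conjTranspose_apply]
  ring

lemma norm_sq_mem_doublyStochastic {𝕜 : Type*} [RCLike 𝕜] {U : Matrix m m 𝕜}
    (hU : U ∈ unitaryGroup m 𝕜) :
    (of fun i j => ‖U i j‖ ^ 2) ∈ doublyStochastic ℝ m := by
  refine mem_doublyStochastic_iff_sum.2 ⟨fun i j => sq_nonneg _, fun i => ?_, fun j => ?_⟩
  · have h := congr_fun₂ (mem_unitaryGroup_iff.1 hU) i i
    simp only [mul_apply, star_apply, one_apply_eq, RCLike.star_def, RCLike.mul_conj] at h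
    exact_mod_cast h
  · have h := congr_fun₂ (mem_unitaryGroup_iff'.1 hU) j j
    simp only [mul_apply, star_apply, one_apply_eq, RCLike.star_def, mul_comm (starRingEnd 𝕜 _),
      RCLike.mul_conj] at h
    exact_mod_cast h

lemma sum_rpow_mul_rpow_mul_le_of_mem_doublyStochastic {M : Matrix m m ℝ}
    (hM : M ∈ doublyStochastic ℝ m) {a b : m → ℝ} (ha : 0 ≤ a) (hb : 0 ≤ b) {p : ℝ}
    (hp0 : 0 ≤ p) (hp1 : p ≤ 1) :
    ∑ i, ∑ j, a i ^ p * b j ^ (1 - p) * M i j ≤ p * ∑ i, a i + (1 - p) * ∑ j, b j :=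
  calc ∑ i, ∑ j, a i ^ p * b j ^ (1 - p) * M i j
      ≤ ∑ i, ∑ j, (p * a i + (1 - p) * b j) * M i j := by
        gcongr with i _ j _
        · exact nonneg_of_mem_doublyStochastic hM
        · exact Real.geom_mean_le_arith_mean2_weighted hp0 (by linarith) (ha i) (hb j) (by ring)
    _ = p * ∑ i, a i * ∑ j, M i j + (1 - p) * ∑ j, b j * ∑ i, M i j := by
        simp only [add_mul, Finset.sum_add_distrib, Finset.mul_sum]
        rw [Finset.sum_comm (f := fun i j => (1 - p) * b j * M i j)]
        simp only [mul_assoc]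
    _ = p * ∑ i, a i + (1 - p) * ∑ j, b j := by
        simp only [sum_row_of_mem_doublyStochastic hM, sum_col_of_mem_doublyStochastic hM, mul_one]

end Matrix

open Matrix

lemma trace_mfun_mul_mfun {n : ℕ} {A B : Matrix (Fin n) (Fin n) ℂ} (hA : A.IsHermitian)
    (hB : B.IsHermitian) (f g : ℝ → ℝ) :
    (mfun f A * mfun g B).trace =
      ((∑ i, ∑ j, f (hA.eigenvalues i) * g (hB.eigenvalues j) *
        ‖(star (hA.eigenvectorUnitary : Matrix (Fin n) (Fin n) ℂ) * hB.eigenvectorUnitary) i j‖ ^ 2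
          : ℝ) : ℂ) := by
  rw [mfun, mfun, dif_pos hA, dif_pos hB, trace_conj_diagonal_mul_conj_diagonal]
  push_cast
  simp only [star_eq_conjTranspose, Complex.star_def, RCLike.mul_conj]
  -- the two sides differ only in `RCLike.ofReal` versus `Complex.ofReal`
  rfl

/-- Tracial Young inequality, `0 ≤ p ≤ 1`: for positive definite complex matrices
`A`, `B` one has `Tr(A^p B^(1-p)) ≤ p Tr A + (1-p) Tr B` (an inequality of complex
numbers in the complex order, so in particular both sides are real). -/
theorem trace_young_le {n : ℕ} (A B : Matrix (Fin n) (Fin n) ℂ)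
    (hA : A.PosDef) (hB : B.PosDef) (p : ℝ) (hp0 : 0 ≤ p) (hp1 : p ≤ 1) :
    (mpow A p * mpow B (1 - p)).trace ≤
      (p : ℂ) * A.trace + ((1 : ℂ) - (p : ℂ)) * B.trace := by
  set a := hA.isHermitian.eigenvalues
  set b := hB.isHermitian.eigenvalues
  have hW := (star hA.isHermitian.eigenvectorUnitary * hB.isHermitian.eigenvectorUnitary).2
  have hsum := sum_rpow_mul_rpow_mul_le_of_mem_doublyStochastic (norm_sq_mem_doublyStochastic hW)
    (fun i => (hA.eigenvalues_pos i).le) (fun j => (hB.eigenvalues_pos j).le) hp0 hp1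
  rw [mpow, mpow, trace_mfun_mul_mfun hA.isHermitian hB.isHermitian,
    hA.isHermitian.trace_eq_sum_eigenvalues, hB.isHermitian.trace_eq_sum_eigenvalues]
  calc _ ≤ ((p * ∑ i, a i + (1 - p) * ∑ j, b j : ℝ) : ℂ) := by exact_mod_cast hsum
    _ = _ := by push_cast; rfl
end

section
/- For all positive definite n×n complex matrices X and Y, the quantum relative entropy satisfies S(X | Y) = Tr( X (log X − log Y) ) ≥ Tr(X) − Tr(Y). -/
open Matrix ComplexOrder

/-!
Diagonalise `X = U diag(d) U*` and `Y = V diag(e) V*`. Since `U* V` is unitary, the weights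
`p i j = |(U* V) i j|²` form a doubly stochastic matrix, and every trace in the inequality becomes
a `p`-weighted sum: `Tr X - Tr Y = ∑ p i j (d i - e j)` and
`S(X∣Y) = ∑ p i j (d i log d i - d i log e j)`. The inequality then holds term by term, since
`d - e ≤ d log d - d log e` is `1 - e / d ≤ log (d / e)`.
-/

theorem Real.sub_le_mul_log_sub_mul_log {d e : ℝ} (hd : 0 < d) (he : 0 < e) :
    d - e ≤ d * Real.log d - d * Real.log e := by
  have h := Real.one_sub_inv_le_log_of_pos (div_pos hd he)
  rw [Real.log_div hd.ne' he.ne', inv_div] at h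
  have := mul_le_mul_of_nonneg_left h hd.le
  rwa [mul_sub, mul_one, mul_div_cancel₀ _ hd.ne', mul_sub] at this

namespace Matrix

variable {n : Type*} [Fintype n] [DecidableEq n]

theorem map_normSq_mem_doublyStochastic {W : Matrix n n ℂ} (hW : W ∈ unitaryGroup n ℂ) :
    W.map Complex.normSq ∈ doublyStochastic ℝ n := by
  refine mem_doublyStochastic_iff_sum.2
    ⟨fun i j => Complex.normSq_nonneg _, fun i => ?_, fun j => ?_⟩
  · have h := congr_fun₂ (mem_unitaryGroup_iff.1 hW) i i
    simp only [mul_apply, star_apply, Complex.star_def, Complex.mul_conj, one_apply_eq] at h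
    exact_mod_cast h
  · have h := congr_fun₂ (mem_unitaryGroup_iff'.1 hW) j j
    simp only [mul_apply, star_apply, Complex.star_def, mul_comm (starRingEnd ℂ _),
      Complex.mul_conj, one_apply_eq] at h
    exact_mod_cast h

theorem sum_sub_sum_le_sum_mul_log_sub {P : Matrix n n ℝ} (hP : P ∈ doublyStochastic ℝ n)
    {d e : n → ℝ} (hd : ∀ i, 0 < d i) (he : ∀ j, 0 < e j) :
    ∑ i, d i - ∑ j, e j ≤
      ∑ i, d i * Real.log (d i) - ∑ i, ∑ j, d i * Real.log (e j) * P i j := by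
  have hrow := sum_row_of_mem_doublyStochastic hP
  have hcol := sum_col_of_mem_doublyStochastic hP
  calc ∑ i, d i - ∑ j, e j = ∑ i, ∑ j, (d i - e j) * P i j := by
        simp only [sub_mul, Finset.sum_sub_distrib, ← Finset.mul_sum, hrow, mul_one]
        rw [Finset.sum_comm]
        simp only [← Finset.mul_sum, hcol, mul_one]
    _ ≤ ∑ i, ∑ j, (d i * Real.log (d i) - d i * Real.log (e j)) * P i j := by
        refine Finset.sum_le_sum fun i _ => Finset.sum_le_sum fun j _ => ?_
        exact mul_le_mul_of_nonneg_right (Real.sub_le_mul_log_sub_mul_log (hd i) (he j))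
          (nonneg_of_mem_doublyStochastic hP)
    _ = _ := by
        simp only [sub_mul, Finset.sum_sub_distrib, ← Finset.mul_sum, hrow, mul_one]

theorem trace_conj_diagonal_mul_conj_diagonal_s7 (U V : Matrix n n ℂ) (a b : n → ℝ) :
    trace (U * diagonal (fun i => (a i : ℂ)) * star U *
        (V * diagonal (fun j => (b j : ℂ)) * star V)) =
      ((∑ i, ∑ j, a i * b j * Complex.normSq ((star U * V) i j) : ℝ) : ℂ) := by
  set W := star U * V
  calc _ = trace (diagonal (fun i => (a i : ℂ)) * W * diagonal (fun j => (b j : ℂ)) *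
        star W) := by
        rw [star_mul, star_star]
        simp only [W, Matrix.mul_assoc]
        rw [trace_mul_comm]
        simp only [Matrix.mul_assoc]
    _ = _ := by
        push_cast
        rw [trace]
        simp only [diag_apply, mul_apply (M := _ * _ * _), mul_diagonal, diagonal_mul,
          star_apply, Complex.star_def]
        refine Finset.sum_congr rfl fun i _ => Finset.sum_congr rfl fun j _ => ?_
        rw [← Complex.mul_conj]
        ring

end Matrix

theorem mfun_of_isHermitian {n : ℕ} {A : Matrix (Fin n) (Fin n) ℂ} (hA : A.IsHermitian)
    (f : ℝ → ℝ) :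
    mfun f A = (hA.eigenvectorUnitary : Matrix (Fin n) (Fin n) ℂ) *
      diagonal (fun i => (f (hA.eigenvalues i) : ℂ)) *
      star (hA.eigenvectorUnitary : Matrix (Fin n) (Fin n) ℂ) := by
  rw [mfun, dif_pos hA, star_eq_conjTranspose]

namespace Matrix.IsHermitian

variable {n : ℕ} {A B : Matrix (Fin n) (Fin n) ℂ}

theorem trace_mul_mfun (hA : A.IsHermitian) (hB : B.IsHermitian) (f : ℝ → ℝ) :
    (A * mfun f B).trace = ((∑ i, ∑ j, hA.eigenvalues i * f (hB.eigenvalues j) *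
      Complex.normSq ((star (hA.eigenvectorUnitary : Matrix (Fin n) (Fin n) ℂ) *
        hB.eigenvectorUnitary) i j) : ℝ) : ℂ) := by
  conv_lhs => rw [hA.spectral_theorem, Unitary.conjStarAlgAut_apply, mfun_of_isHermitian hB]
  exact trace_conj_diagonal_mul_conj_diagonal_s7 _ _ _ _

theorem trace_mul_mfun_self (hA : A.IsHermitian) (f : ℝ → ℝ) :
    (A * mfun f A).trace = ((∑ i, hA.eigenvalues i * f (hA.eigenvalues i) : ℝ) : ℂ) := by
  rw [hA.trace_mul_mfun hA, Unitary.coe_star_mul_self]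
  simp [one_apply, apply_ite]

end Matrix.IsHermitian

/-- In `ComplexOrder`, `≤` on `ℂ` also asserts that both sides have the same imaginary part. -/
theorem relativeEntropy_ge_trace_sub {n : ℕ} (X Y : Matrix (Fin n) (Fin n) ℂ)
    (hX : X.PosDef) (hY : Y.PosDef) :
    X.trace - Y.trace ≤ (X * (mfun Real.log X - mfun Real.log Y)).trace := by
  have hW : star (hX.1.eigenvectorUnitary : Matrix (Fin n) (Fin n) ℂ) *
      hY.1.eigenvectorUnitary ∈ unitaryGroup (Fin n) ℂ :=
    Submonoid.mul_mem _ (Unitary.star_mem hX.1.eigenvectorUnitary.2) hY.1.eigenvectorUnitary.2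
  have hsum := sum_sub_sum_le_sum_mul_log_sub (map_normSq_mem_doublyStochastic hW)
    hX.eigenvalues_pos hY.eigenvalues_pos
  rw [mul_sub, trace_sub, hX.1.trace_eq_sum_eigenvalues, hY.1.trace_eq_sum_eigenvalues,
    hX.1.trace_mul_mfun_self, hX.1.trace_mul_mfun hY.1]
  simp only [map_apply] at hsum
  have hsum_ℂ := Complex.real_le_real.2 hsum
  push_cast at hsum_ℂ ⊢
  exact hsum_ℂ
end

section
/- Fix a real exponent p and a real exponent s > 0. The following are equivalent: (i) for every dimension n, every n×n complex matrix H and every positive semidefinite n×n matrix L, the function A ↦ Tr( (L + H* A^p H)^s ) is convex on the set of positive definite n×n complex matrices; (ii) for every dimension n and every n×n complex matrix H, the function A ↦ Tr( (H* A^p H)^s ) is convex on the set of positive definite n×n complex matrices. -/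
/-
Write `L = Kᴴ K` and double the dimension: with `H' = [[H, 0], [K, 0]]` and `A' = diag(A, 1)`
one has `H'ᴴ A'^p H' = diag(L + Hᴴ A^p H, 0)`, and since `0^s = 0` for `s > 0`,
`Tr((H'ᴴ A'^p H')^s) = Tr((L + Hᴴ A^p H)^s)`. The map `A ↦ diag(A, 1)` is affine and preserves
positive definiteness, so the `L = 0` case in dimension `2n` yields the general case in
dimension `n`; the converse is the specialization `L = 0`. The block computation of `mpow` rests
on the fact that `mfun f` may be computed from any unitary diagonalization.
-/

open Matrix ComplexOrder

section UnitaryDiagonalization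

variable {m l o : Type*} [Fintype m] [DecidableEq m] [Fintype l] [DecidableEq l]
  [Fintype o] [DecidableEq o]

lemma diagonal_comp_mul_eq_mul_diagonal_comp (f : ℝ → ℝ) {d : m → ℝ} {e : l → ℝ}
    {W : Matrix m l ℂ}
    (h : diagonal (fun i => (d i : ℂ)) * W = W * diagonal (fun j => (e j : ℂ))) :
    diagonal (fun i => (f (d i) : ℂ)) * W = W * diagonal (fun j => (f (e j) : ℂ)) := by
  ext i j
  have hij := congrFun₂ h i j
  simp only [diagonal_mul, mul_diagonal] at hij ⊢
  by_cases hW : W i j = 0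
  · simp [hW]
  · have hde : (d i : ℂ) = e j := mul_left_cancel₀ hW (by rw [mul_comm, hij])
    rw [Complex.ofReal_injective hde, mul_comm]

lemma unitary_conj_diagonal_comp_eq (f : ℝ → ℝ) {U V : Matrix m m ℂ}
    (hU : U ∈ unitaryGroup m ℂ) (hV : V ∈ unitaryGroup m ℂ) {d e : m → ℝ}
    (h : U * diagonal (fun i => (d i : ℂ)) * Uᴴ = V * diagonal (fun i => (e i : ℂ)) * Vᴴ) :
    U * diagonal (fun i => (f (d i) : ℂ)) * Uᴴ = V * diagonal (fun i => (f (e i) : ℂ)) * Vᴴ := by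
  have hUU : Uᴴ * U = 1 := mem_unitaryGroup_iff'.mp hU
  have hUU' : U * Uᴴ = 1 := mem_unitaryGroup_iff.mp hU
  have hVV : V * Vᴴ = 1 := mem_unitaryGroup_iff.mp hV
  have hVV' : Vᴴ * V = 1 := mem_unitaryGroup_iff'.mp hV
  have hW : diagonal (fun i => (d i : ℂ)) * (Uᴴ * V) = Uᴴ * V * diagonal (fun i => (e i : ℂ)) := by
    simpa only [Matrix.mul_assoc, hVV', hUU, ← Matrix.mul_assoc Uᴴ U, Matrix.one_mul,
      Matrix.mul_one] using congr(Uᴴ * $h * V)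
  simpa only [Matrix.mul_assoc, hVV, ← Matrix.mul_assoc U Uᴴ, hUU', Matrix.one_mul,
    Matrix.mul_one] using congr(U * $(diagonal_comp_mul_eq_mul_diagonal_comp f hW) * Vᴴ)

lemma Matrix.IsHermitian.eq_eigenvectorUnitary_conj {A : Matrix m m ℂ} (hA : A.IsHermitian) :
    A = (hA.eigenvectorUnitary : Matrix m m ℂ) * diagonal (fun i => (hA.eigenvalues i : ℂ)) *
      (hA.eigenvectorUnitary : Matrix m m ℂ)ᴴ := by
  conv_lhs => rw [hA.spectral_theorem]
  rfl

lemma fromBlocks_mem_unitaryGroup {U : Matrix m m ℂ} {V : Matrix l l ℂ}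
    (hU : U ∈ unitaryGroup m ℂ) (hV : V ∈ unitaryGroup l ℂ) :
    fromBlocks U 0 0 V ∈ unitaryGroup (m ⊕ l) ℂ := by
  rw [mem_unitaryGroup_iff', star_eq_conjTranspose, fromBlocks_conjTranspose, fromBlocks_multiply]
  simp [← star_eq_conjTranspose, mem_unitaryGroup_iff'.mp hU, mem_unitaryGroup_iff'.mp hV]

lemma reindex_mem_unitaryGroup (e : m ≃ o) {U : Matrix m m ℂ} (hU : U ∈ unitaryGroup m ℂ) :
    reindex e e U ∈ unitaryGroup o ℂ := by
  rw [mem_unitaryGroup_iff', star_eq_conjTranspose, conjTranspose_reindex, reindex_apply,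
    reindex_apply, submatrix_mul_equiv, ← star_eq_conjTranspose, mem_unitaryGroup_iff'.mp hU,
    submatrix_one_equiv]

lemma reindex_fromBlocks_conj_diagonal (e : m ⊕ l ≃ o) (U : Matrix m m ℂ) (V : Matrix l l ℂ)
    (d₁ : m → ℝ) (d₂ : l → ℝ) :
    reindex e e (fromBlocks (U * diagonal (fun i => (d₁ i : ℂ)) * Uᴴ) 0 0
        (V * diagonal (fun i => (d₂ i : ℂ)) * Vᴴ)) =
      reindex e e (fromBlocks U 0 0 V) *
        diagonal (fun i => ((Sum.elim d₁ d₂ (e.symm i) : ℝ) : ℂ)) *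
          (reindex e e (fromBlocks U 0 0 V))ᴴ := by
  have hd : (fun i => ((Sum.elim d₁ d₂ (e.symm i) : ℝ) : ℂ)) =
      Sum.elim (fun i => (d₁ i : ℂ)) (fun i => (d₂ i : ℂ)) ∘ e.symm := by
    ext i
    simp only [Function.comp_apply]
    cases e.symm i <;> rfl
  rw [hd, conjTranspose_reindex, fromBlocks_conjTranspose, ← submatrix_diagonal_equiv,
    ← fromBlocks_diagonal]
  simp only [reindex_apply, submatrix_mul_equiv, fromBlocks_multiply]
  simp

end UnitaryDiagonalization

section FunctionalCalculus

variable {n : ℕ}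

lemma Matrix.IsHermitian.mfun_eq {A : Matrix (Fin n) (Fin n) ℂ} (hA : A.IsHermitian)
    (f : ℝ → ℝ) :
    mfun f A = (hA.eigenvectorUnitary : Matrix (Fin n) (Fin n) ℂ) *
      diagonal (fun i => (f (hA.eigenvalues i) : ℂ)) *
        (hA.eigenvectorUnitary : Matrix (Fin n) (Fin n) ℂ)ᴴ := by
  rw [mfun, dif_pos hA]

lemma mfun_eq_of_eq_unitary_conj_diagonal (f : ℝ → ℝ) {A U : Matrix (Fin n) (Fin n) ℂ}
    (hU : U ∈ unitaryGroup (Fin n) ℂ) (d : Fin n → ℝ)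
    (h : A = U * diagonal (fun i => (d i : ℂ)) * Uᴴ) :
    mfun f A = U * diagonal (fun i => (f (d i) : ℂ)) * Uᴴ := by
  have hA : A.IsHermitian := h ▸ isHermitian_mul_mul_conjTranspose U
    (isHermitian_diagonal_of_self_adjoint _ (by ext; simp))
  rw [hA.mfun_eq]
  exact unitary_conj_diagonal_comp_eq f hA.eigenvectorUnitary.2 hU
    (hA.eq_eigenvectorUnitary_conj.symm.trans h)

lemma mfun_isHermitian (f : ℝ → ℝ) (A : Matrix (Fin n) (Fin n) ℂ) : (mfun f A).IsHermitian := by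
  unfold mfun
  split
  · exact isHermitian_mul_mul_conjTranspose _
      (isHermitian_diagonal_of_self_adjoint _ (by ext; simp))
  · exact isHermitian_zero

lemma mfun_one {f : ℝ → ℝ} (hf : f 1 = 1) : mfun f (1 : Matrix (Fin n) (Fin n) ℂ) = 1 := by
  simpa [hf] using mfun_eq_of_eq_unitary_conj_diagonal f (one_mem _) (fun _ => 1) (by simp)

lemma mfun_zero {f : ℝ → ℝ} (hf : f 0 = 0) : mfun f (0 : Matrix (Fin n) (Fin n) ℂ) = 0 := by
  simpa [hf] using mfun_eq_of_eq_unitary_conj_diagonal f (one_mem _) (fun _ => 0) (by simp)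

lemma mfun_reindex_fromBlocks {k : ℕ} (f : ℝ → ℝ) {A : Matrix (Fin n) (Fin n) ℂ}
    {B : Matrix (Fin k) (Fin k) ℂ} (hA : A.IsHermitian) (hB : B.IsHermitian) :
    mfun f (reindex finSumFinEquiv finSumFinEquiv (fromBlocks A 0 0 B)) =
      reindex finSumFinEquiv finSumFinEquiv (fromBlocks (mfun f A) 0 0 (mfun f B)) := by
  have hU := reindex_mem_unitaryGroup finSumFinEquiv
    (fromBlocks_mem_unitaryGroup hA.eigenvectorUnitary.2 hB.eigenvectorUnitary.2)
  have hAB := reindex_fromBlocks_conj_diagonal finSumFinEquiv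
    (hA.eigenvectorUnitary : Matrix (Fin n) (Fin n) ℂ)
    (hB.eigenvectorUnitary : Matrix (Fin k) (Fin k) ℂ) hA.eigenvalues hB.eigenvalues
  rw [← hA.eq_eigenvectorUnitary_conj, ← hB.eq_eigenvectorUnitary_conj] at hAB
  rw [mfun_eq_of_eq_unitary_conj_diagonal f hU _ hAB, hA.mfun_eq, hB.mfun_eq,
    reindex_fromBlocks_conj_diagonal]
  congr 4
  ext i
  cases finSumFinEquiv.symm i <;> rfl

end FunctionalCalculus

lemma fromBlocks_conjTranspose_mul_fromBlocks_mul {m l α : Type*} [Fintype m] [Fintype l]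
    [DecidableEq l] [Semiring α] [StarRing α] (H X : Matrix m m α) (K : Matrix l m α) :
    (fromBlocks H 0 K 0)ᴴ * fromBlocks X 0 0 1 * fromBlocks H 0 K 0 =
      fromBlocks (Kᴴ * K + Hᴴ * X * H) 0 0 (0 : Matrix l l α) := by
  simp [fromBlocks_conjTranspose, fromBlocks_multiply, add_comm]

lemma trace_reindex_fromBlocks {m l o α : Type*} [Fintype m] [Fintype l] [Fintype o]
    [AddCommMonoid α] (e : m ⊕ l ≃ o) (A : Matrix m m α) (B : Matrix m l α) (C : Matrix l m α)
    (D : Matrix l l α) : (reindex e e (fromBlocks A B C D)).trace = A.trace + D.trace := by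
  simp only [trace, diag, reindex_apply, submatrix_apply]
  rw [Equiv.sum_comp e.symm (fun i => fromBlocks A B C D i i), Fintype.sum_sum_type]
  rfl

lemma Matrix.PosDef.fromBlocks_zero {m l : Type*} [Fintype m] [DecidableEq m] [Fintype l]
    [DecidableEq l] {A : Matrix m m ℂ} {D : Matrix l l ℂ} (hA : A.PosDef) (hD : D.PosDef) :
    (fromBlocks A 0 0 D).PosDef := by
  have := hA.isUnit.invertible
  have hpsd : (fromBlocks A 0 0 D).PosSemidef := by
    simpa using (PosDef.fromBlocks₁₁ (0 : Matrix m l ℂ) D hA).2 (by simpa using hD.posSemidef)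
  refine hpsd.posDef_iff_isUnit.2 ((isUnit_iff_isUnit_det _).2 ?_)
  rw [det_fromBlocks_zero₂₁]
  exact (hA.isUnit.map detMonoidHom).mul (hD.isUnit.map detMonoidHom)

lemma Matrix.PosSemidef.exists_conjTranspose_mul_self_eq {m : Type*} [Fintype m] [DecidableEq m]
    {A : Matrix m m ℂ} (hA : A.PosSemidef) : ∃ K : Matrix m m ℂ, Kᴴ * K = A := by
  open scoped MatrixOrder in
  exact ⟨CFC.sqrt A, by
    rw [(CFC.sqrt_nonneg A).posSemidef.isHermitian.eq]
    exact CFC.sqrt_mul_sqrt_self A hA.nonneg⟩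

lemma convex_setOf_posDef {m : Type*} : Convex ℝ {A : Matrix m m ℂ | A.PosDef} :=
  convex_iff_forall_pos.mpr fun _ hA _ hB _ _ ha hb _ => (hA.smul ha).add (hB.smul hb)

noncomputable def blockDiagOne (n k : ℕ) :
    Matrix (Fin n) (Fin n) ℂ →ᵃ[ℝ] Matrix (Fin (n + k)) (Fin (n + k)) ℂ where
  toFun X := reindex finSumFinEquiv finSumFinEquiv (fromBlocks X 0 0 1)
  linear :=
    { toFun X := reindex finSumFinEquiv finSumFinEquiv (fromBlocks X 0 0 0)
      map_add' X Y := by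
        simp only [← coe_reindexLinearEquiv ℝ ℂ, ← map_add, fromBlocks_add, add_zero]
      map_smul' a X := by
        simp only [← coe_reindexLinearEquiv ℝ ℂ, ← map_smul, fromBlocks_smul, smul_zero,
          RingHom.id_apply] }
  map_vadd' X Y := by
    simp only [← coe_reindexLinearEquiv ℝ ℂ, vadd_eq_add, LinearMap.coe_mk, AddHom.coe_mk,
      ← map_add, fromBlocks_add, add_zero, zero_add]

lemma blockDiagOne_apply {n k : ℕ} (X : Matrix (Fin n) (Fin n) ℂ) :
    blockDiagOne n k X = reindex finSumFinEquiv finSumFinEquiv (fromBlocks X 0 0 1) := rfl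

lemma blockDiagOne_posDef {n k : ℕ} {X : Matrix (Fin n) (Fin n) ℂ} (hX : X.PosDef) :
    (blockDiagOne n k X).PosDef :=
  (hX.fromBlocks_zero PosDef.one).submatrix finSumFinEquiv.symm.injective

lemma trace_mpow_dilation {n k : ℕ} (p : ℝ) {s : ℝ} (hs : s ≠ 0) (H : Matrix (Fin n) (Fin n) ℂ)
    (K : Matrix (Fin k) (Fin n) ℂ) {X : Matrix (Fin n) (Fin n) ℂ} (hX : X.IsHermitian) :
    (mpow ((reindex finSumFinEquiv finSumFinEquiv (fromBlocks H (0 : Matrix _ (Fin k) ℂ) K 0))ᴴ *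
        mpow (blockDiagOne n k X) p * reindex finSumFinEquiv finSumFinEquiv (fromBlocks H 0 K 0))
        s).trace = (mpow (Kᴴ * K + Hᴴ * mpow X p * H) s).trace := by
  have hXp : mpow (blockDiagOne n k X) p =
      reindex finSumFinEquiv finSumFinEquiv (fromBlocks (mpow X p) 0 0 1) := by
    rw [blockDiagOne_apply, mpow, mfun_reindex_fromBlocks _ hX isHermitian_one,
      mfun_one (Real.one_rpow p)]
    rfl
  have hM : (Kᴴ * K + Hᴴ * mpow X p * H).IsHermitian :=
    (isHermitian_conjTranspose_mul_self K).add
      (isHermitian_conjTranspose_mul_mul H (mfun_isHermitian _ X))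
  rw [hXp, conjTranspose_reindex, reindex_apply, reindex_apply, reindex_apply,
    submatrix_mul_equiv, submatrix_mul_equiv, fromBlocks_conjTranspose_mul_fromBlocks_mul,
    ← reindex_apply, mpow, mfun_reindex_fromBlocks _ hM isHermitian_zero,
    mfun_zero (f := (· ^ s)) (Real.zero_rpow hs), trace_reindex_fromBlocks, trace_zero, add_zero]
  rfl

/-- For fixed exponents `p` and `s > 0`, the trace function
`A ↦ Tr((L + Hᴴ A^p H)^s)` is convex on positive definite matrices for every
dimension, every `H` and every positive semidefinite `L`, if and only if this holds
with `L = 0`, i.e. `A ↦ Tr((Hᴴ A^p H)^s)` is convex for every dimension and `H`. -/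
theorem convex_trace_shifted_iff (p s : ℝ) (hs : 0 < s) :
    (∀ (n : ℕ) (H L : Matrix (Fin n) (Fin n) ℂ), L.PosSemidef →
        ConvexOn ℝ {A : Matrix (Fin n) (Fin n) ℂ | A.PosDef}
          (fun A => (mpow (L + Hᴴ * mpow A p * H) s).trace.re)) ↔
      (∀ (n : ℕ) (H : Matrix (Fin n) (Fin n) ℂ),
        ConvexOn ℝ {A : Matrix (Fin n) (Fin n) ℂ | A.PosDef}
          (fun A => (mpow (Hᴴ * mpow A p * H) s).trace.re)) := by
  refine ⟨fun h n H => by simpa using h n H 0 PosSemidef.zero, fun h n H L hL => ?_⟩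
  obtain ⟨K, rfl⟩ := hL.exists_conjTranspose_mul_self_eq
  have hdilated := (h (n + n) (reindex finSumFinEquiv finSumFinEquiv
    (fromBlocks H 0 K 0))).comp_affineMap (blockDiagOne n n)
  refine (hdilated.subset (fun X hX => blockDiagOne_posDef hX) convex_setOf_posDef).congr
    fun X (hX : X.PosDef) => ?_
  simp only [Function.comp_apply, trace_mpow_dilation p hs.ne' H K hX.isHermitian]
end
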